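/- Fix r ∈ (0,1], λ > 0, and a positively oriented orthonormal basis {v₀, v₁, w} of ℝ³ (i.e., v₁ × v₀ = w). Define α(t) = √(1−r²)·w + r·cos(λt/r)·v₁ + r·sin(λt/r)·v₀. Then |α(t)| = 1 for all t, |α'(t)| = λ for all t, and α satisfies α''(t) = |α'(t)| k₀ (α(t) × α'(t)) − |α'(t)|² α(t) for all t, where k₀ = √(1−r²)/r. -/

import Mathlib

open Real MeasureTheory Filter

noncomputable def dot3 (u v : Fin 3 → ℝ) : ℝ := ∑ i, u i * v i

noncomputable def norm3 (u : Fin 3 → ℝ) : ℝ := Real.sqrt (dot3 u u)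

noncomputable def cross3 (u v : Fin 3 → ℝ) : Fin 3 → ℝ :=
  ![u 1 * v 2 - u 2 * v 1, u 2 * v 0 - u 0 * v 2, u 0 * v 1 - u 1 * v 0]

/-- Projection onto the orthogonal complement of `x`. -/
noncomputable def proj3 (x v : Fin 3 → ℝ) : Fin 3 → ℝ := v - dot3 v x • x

/-- Covariant derivative of a tangent field `V` along a sphere-valued curve `γ`
(tangential projection of the ambient derivative). -/
noncomputable def covDeriv (γ V : ℝ → Fin 3 → ℝ) : ℝ → Fin 3 → ℝ :=
  fun t => proj3 (γ t) (deriv V t)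

/-! With `s = √(1 - r ^ 2)`, `ω = l / r`, `u θ = cos θ • v₁ + sin θ • v₀` and
`u⊥ θ = cos θ • v₀ - sin θ • v₁`, the curve is `α t = s • w + r • u (ω t)`, a circle of latitude
on the unit sphere. Then `α' = l • u⊥` and `α'' = -(l ^ 2 / r) • u`. Since `u × u⊥ = w` and
`w × u⊥ = -u`, we get `α × α' = l • (r • w - s • u)`, and the equation for `α''` reduces to
`s ^ 2 + r ^ 2 = 1`. -/

open Matrix

lemma dot3_eq_dotProduct (u v : Fin 3 → ℝ) : dot3 u v = u ⬝ᵥ v := rfl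

lemma cross3_eq_crossProduct (u v : Fin 3 → ℝ) : cross3 u v = u ⨯₃ v := rfl

section PlanarCircle

variable {E : Type*}

noncomputable def planarCircle [AddCommGroup E] [Module ℝ E] (a b : E) (θ : ℝ) : E :=
  cos θ • a + sin θ • b

lemma planarCircle_neg_neg [AddCommGroup E] [Module ℝ E] (a b : E) (θ : ℝ) :
    planarCircle (-a) (-b) θ = -planarCircle a b θ := by
  simp only [planarCircle, smul_neg, neg_add]

lemma hasDerivAt_smul_planarCircle [NormedAddCommGroup E] [NormedSpace ℝ E] (a b : E)
    (ρ ω t : ℝ) :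
    HasDerivAt (fun t => ρ • planarCircle a b (ω * t))
      ((ρ * ω) • planarCircle b (-a) (ω * t)) t := by
  have hθ : HasDerivAt (fun t => ω * t) ω t := by simpa using (hasDerivAt_id t).const_mul ω
  convert (((hθ.cos).smul_const a).add ((hθ.sin).smul_const b)).const_smul ρ using 1
  · ext x
    simp [planarCircle]
  · simp only [planarCircle, smul_neg, smul_add, smul_smul]
    module

end PlanarCircle

section Orthonormal

variable {n : Type*} [Fintype n] {a b : n → ℝ}

lemma dotProduct_planarCircle_self (ha : a ⬝ᵥ a = 1) (hb : b ⬝ᵥ b = 1) (hab : a ⬝ᵥ b = 0)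
    (θ : ℝ) : planarCircle a b θ ⬝ᵥ planarCircle a b θ = 1 := by
  simp only [planarCircle, add_dotProduct, dotProduct_add, smul_dotProduct, dotProduct_smul,
    dotProduct_comm b a, ha, hb, hab, smul_eq_mul]
  linear_combination sin_sq_add_cos_sq θ

lemma dotProduct_planarCircle_swap_neg_self (ha : a ⬝ᵥ a = 1) (hb : b ⬝ᵥ b = 1)
    (hab : a ⬝ᵥ b = 0) (θ : ℝ) : planarCircle b (-a) θ ⬝ᵥ planarCircle b (-a) θ = 1 :=
  dotProduct_planarCircle_self hb (by simpa using ha) (by simp [dotProduct_comm b a, hab]) θ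

lemma planarCircle_dotProduct_of_orthogonal {c : n → ℝ} (hac : a ⬝ᵥ c = 0) (hbc : b ⬝ᵥ c = 0)
    (θ : ℝ) : planarCircle a b θ ⬝ᵥ c = 0 := by
  simp [planarCircle, add_dotProduct, hac, hbc]

end Orthonormal

lemma planarCircle_cross_planarCircle_swap_neg (a b : Fin 3 → ℝ) (θ : ℝ) :
    planarCircle a b θ ⨯₃ planarCircle b (-a) θ = a ⨯₃ b := by
  simp only [planarCircle, map_add, map_smul, LinearMap.add_apply, LinearMap.smul_apply,
    map_neg, cross_self, ← cross_anticomm a b]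
  linear_combination (norm := module) cos_sq_add_sin_sq θ • a ⨯₃ b

section LatitudeCircle

variable {a b : Fin 3 → ℝ}

lemma cross_cross_planarCircle_swap_neg (ha : a ⬝ᵥ a = 1) (hb : b ⬝ᵥ b = 1) (hab : a ⬝ᵥ b = 0)
    (θ : ℝ) : a ⨯₃ b ⨯₃ planarCircle b (-a) θ = -planarCircle a b θ := by
  simp only [planarCircle, map_add, map_smul, map_neg, cross_cross_eq_smul_sub_smul,
    dotProduct_comm b a, ha, hb, hab]
  module

lemma cross_dotProduct_cross_self (ha : a ⬝ᵥ a = 1) (hb : b ⬝ᵥ b = 1) (hab : a ⬝ᵥ b = 0) :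
    a ⨯₃ b ⬝ᵥ a ⨯₃ b = 1 := by
  rw [cross_dot_cross, ha, hb, hab, dotProduct_comm b a, hab]
  ring

noncomputable def latitudeCircle (a b : Fin 3 → ℝ) (s r ω t : ℝ) : Fin 3 → ℝ :=
  s • a ⨯₃ b + r • planarCircle a b (ω * t)

lemma deriv_latitudeCircle (a b : Fin 3 → ℝ) (s r ω : ℝ) :
    deriv (latitudeCircle a b s r ω) = fun t => (r * ω) • planarCircle b (-a) (ω * t) := by
  ext1 t
  exact ((hasDerivAt_smul_planarCircle a b r ω t).const_add _).deriv

lemma deriv_deriv_latitudeCircle (a b : Fin 3 → ℝ) (s r ω : ℝ) :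
    deriv (deriv (latitudeCircle a b s r ω))
      = fun t => -(r * ω * ω) • planarCircle a b (ω * t) := by
  ext1 t
  rw [deriv_latitudeCircle, (hasDerivAt_smul_planarCircle b (-a) (r * ω) ω t).deriv,
    planarCircle_neg_neg, smul_neg, neg_smul]

lemma latitudeCircle_dotProduct_self (ha : a ⬝ᵥ a = 1) (hb : b ⬝ᵥ b = 1) (hab : a ⬝ᵥ b = 0)
    (s r ω t : ℝ) : latitudeCircle a b s r ω t ⬝ᵥ latitudeCircle a b s r ω t = s ^ 2 + r ^ 2 := by
  have hca : a ⬝ᵥ a ⨯₃ b = 0 := dot_self_cross a b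
  have hcb : b ⬝ᵥ a ⨯₃ b = 0 := dot_cross_self a b
  simp only [latitudeCircle, add_dotProduct, dotProduct_add, smul_dotProduct, dotProduct_smul,
    smul_eq_mul, cross_dotProduct_cross_self ha hb hab, dotProduct_planarCircle_self ha hb hab,
    dotProduct_comm (a ⨯₃ b), planarCircle_dotProduct_of_orthogonal hca hcb]
  ring

lemma deriv_latitudeCircle_dotProduct_self (ha : a ⬝ᵥ a = 1) (hb : b ⬝ᵥ b = 1)
    (hab : a ⬝ᵥ b = 0) (s r ω t : ℝ) :
    deriv (latitudeCircle a b s r ω) t ⬝ᵥ deriv (latitudeCircle a b s r ω) t = (r * ω) ^ 2 := by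
  simp only [deriv_latitudeCircle, dotProduct_smul, smul_dotProduct, smul_eq_mul,
    dotProduct_planarCircle_swap_neg_self ha hb hab]
  ring

/-- For `s ^ 2 + r ^ 2 = 1` the circle lies on the unit sphere, and this says that it has
geodesic curvature `s / r` there. -/
lemma deriv_deriv_latitudeCircle_eq (ha : a ⬝ᵥ a = 1) (hb : b ⬝ᵥ b = 1) (hab : a ⬝ᵥ b = 0)
    {s r : ℝ} (hr : r ≠ 0) (hsr : s ^ 2 + r ^ 2 = 1) (ω t : ℝ) :
    deriv (deriv (latitudeCircle a b s r ω)) t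
      = (r * ω * (s / r)) • latitudeCircle a b s r ω t ⨯₃ deriv (latitudeCircle a b s r ω) t
        - (r * ω) ^ 2 • latitudeCircle a b s r ω t := by
  rw [deriv_deriv_latitudeCircle, deriv_latitudeCircle]
  simp only [latitudeCircle, map_add, map_smul, LinearMap.add_apply, LinearMap.smul_apply,
    planarCircle_cross_planarCircle_swap_neg, cross_cross_planarCircle_swap_neg ha hb hab]
  match_scalars
  · field_simp
    linear_combination ω ^ 2 * hsr
  · field_simp
    ring

end LatitudeCircle

theorem stmt2_general (r l : ℝ) (hr : 0 < r) (hr1 : r ≤ 1) (hl : 0 < l)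
    (v₀ v₁ w : Fin 3 → ℝ)
    (h00 : dot3 v₀ v₀ = 1) (h11 : dot3 v₁ v₁ = 1)
    (h01 : dot3 v₀ v₁ = 0)
    (horient : cross3 v₁ v₀ = w) :
    let k₀ : ℝ := Real.sqrt (1 - r ^ 2) / r
    let α : ℝ → Fin 3 → ℝ := fun t =>
      Real.sqrt (1 - r ^ 2) • w + (r * Real.cos (l * t / r)) • v₁
        + (r * Real.sin (l * t / r)) • v₀
    (∀ t, norm3 (α t) = 1) ∧ (∀ t, norm3 (deriv α t) = l) ∧
    (∀ t, deriv (deriv α) t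
        = (norm3 (deriv α t) * k₀) • cross3 (α t) (deriv α t)
          - (norm3 (deriv α t)) ^ 2 • α t) := by
  intro k₀ α
  rw [dot3_eq_dotProduct] at h00 h11 h01
  have h10 : v₁ ⬝ᵥ v₀ = 0 := by rwa [dotProduct_comm]
  have hsr : √(1 - r ^ 2) ^ 2 + r ^ 2 = 1 := by
    rw [sq_sqrt (by nlinarith)]
    ring
  have hα : α = latitudeCircle v₁ v₀ √(1 - r ^ 2) r (l / r) := by
    ext1 t
    simp only [α, latitudeCircle, planarCircle, ← horient, cross3_eq_crossProduct, smul_add,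
      smul_smul, add_assoc, div_mul_eq_mul_div]
  have hspeed : r * (l / r) = l := mul_div_cancel₀ l hr.ne'
  have hnorm_deriv : ∀ t, norm3 (deriv α t) = l := fun t => by
    rw [norm3, dot3_eq_dotProduct, hα, deriv_latitudeCircle_dotProduct_self h11 h00 h10, hspeed,
      sqrt_sq hl.le]
  refine ⟨fun t => ?_, hnorm_deriv, fun t => ?_⟩
  · rw [norm3, dot3_eq_dotProduct, hα, latitudeCircle_dotProduct_self h11 h00 h10, hsr, sqrt_one]
  · rw [hnorm_deriv, cross3_eq_crossProduct, hα, deriv_deriv_latitudeCircle_eq h11 h00 h10 hr.ne' hsr,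
      hspeed]

theorem stmt2 (r l : ℝ) (hr : 0 < r) (hr1 : r ≤ 1) (hl : 0 < l)
    (v₀ v₁ w : Fin 3 → ℝ)
    (h00 : dot3 v₀ v₀ = 1) (h11 : dot3 v₁ v₁ = 1) (hww : dot3 w w = 1)
    (h01 : dot3 v₀ v₁ = 0) (h0w : dot3 v₀ w = 0) (h1w : dot3 v₁ w = 0)
    (horient : cross3 v₁ v₀ = w) :
    let k₀ : ℝ := Real.sqrt (1 - r ^ 2) / r
    let α : ℝ → Fin 3 → ℝ := fun t =>
      Real.sqrt (1 - r ^ 2) • w + (r * Real.cos (l * t / r)) • v₁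
        + (r * Real.sin (l * t / r)) • v₀
    (∀ t, norm3 (α t) = 1) ∧ (∀ t, norm3 (deriv α t) = l) ∧
    (∀ t, deriv (deriv α) t
        = (norm3 (deriv α t) * k₀) • cross3 (α t) (deriv α t)
          - (norm3 (deriv α t)) ^ 2 • α t) :=
  stmt2_general r l hr hr1 hl v₀ v₁ w h00 h11 h01 horient
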